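/- Let ρ_{01} = [[A, B],[B†, D]] be positive semidefinite on ℂ²⊗H_Y with A = a|φ⟩⟨φ| for a unit vector |φ⟩ and a > 0. If P_{supp A} B P_{Ker A} = 0, then B = κ|φ⟩⟨φ| for some scalar κ, D − (|κ|²/a)|φ⟩⟨φ| is positive semidefinite, and ρ_{01} = |η⟩⟨η| ⊗ |φ⟩⟨φ| + |α₁⟩⟨α₁| ⊗ (D − (|κ|²/a)|φ⟩⟨φ|) with |η⟩ = √a|α₀⟩ + (κ̄/√a)|α₁⟩; hence ρ_{01} is separable across the cut ℂ²|H_Y. -/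

import Mathlib

open Matrix Kronecker ComplexOrder

/-!
Write `P = |φ⟩⟨φ|`. Since `ρ ≥ 0`, a vector on which its quadratic form vanishes lies in its
kernel; applied to `(u, 0)` with `u ∈ Ker A` this gives `B† u = 0`, i.e. `(1 - P) B = 0`.
Together with `P B (1 - P) = 0` this forces `B = P B P = κ P`. Compressing `ρ` to the second
block along a suitable completion of the square gives `D - (|κ|² / a) P ≥ 0`, and the
decomposition of `ρ` is then an entrywise identity.
-/

lemma eq_mul_mul_self_of_one_sub_mul_eq_zero {R : Type*} [Ring R] {p b : R}
    (h₁ : (1 - p) * b = 0) (h₂ : p * b * (1 - p) = 0) : b = p * b * p := by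
  rw [sub_mul, one_mul, sub_eq_zero] at h₁
  rw [mul_sub, mul_one, sub_eq_zero] at h₂
  exact h₁.trans h₂

namespace Matrix

section RankOne

variable {m R : Type*} [Fintype m] [CommSemiring R] [StarRing R]

lemma isStarProjection_vecMulVec_self_star {φ : m → R} (hφ : star φ ⬝ᵥ φ = 1) :
    IsStarProjection (vecMulVec φ (star φ)) where
  isIdempotentElem := by rw [IsIdempotentElem, vecMulVec_mul_vecMulVec, hφ, one_smul]
  isSelfAdjoint := by
    rw [IsSelfAdjoint, star_eq_conjTranspose, conjTranspose_vecMulVec, star_star]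

lemma vecMulVec_mul_mul_vecMulVec (φ : m → R) (B : Matrix m m R) :
    vecMulVec φ (star φ) * B * vecMulVec φ (star φ) =
      (star φ ⬝ᵥ B *ᵥ φ) • vecMulVec φ (star φ) := by
  rw [vecMulVec_mul, vecMulVec_mul_vecMulVec, vecMulVec_smul, dotProduct_mulVec]

end RankOne

section Blocks

variable {ι m l R 𝕜 : Type*} [RCLike 𝕜]

lemma IsHermitian.submatrix_prodMk_swap [Star R] {M : Matrix (ι × m) (ι × m) R}
    (hM : M.IsHermitian) (i j : ι) :
    M.submatrix (Prod.mk j) (Prod.mk i) = (M.submatrix (Prod.mk i) (Prod.mk j))ᴴ := by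
  ext a b
  exact (hM.apply (j, a) (i, b)).symm

lemma IsHermitian.submatrix_prodMk_swap_eq_smul [CommSemiring R] [StarRing R]
    {M : Matrix (ι × m) (ι × m) R} (hM : M.IsHermitian) {P : Matrix m m R}
    (hP : P.IsHermitian) {i j : ι} {κ : R} (h : M.submatrix (Prod.mk i) (Prod.mk j) = κ • P) :
    M.submatrix (Prod.mk j) (Prod.mk i) = starRingEnd R κ • P := by
  rw [hM.submatrix_prodMk_swap, h, conjTranspose_smul, hP.eq]
  rfl

lemma conjTranspose_mul_mul_eq_sum_submatrix [Fintype ι] [Fintype m] [CommSemiring R]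
    [StarRing R] (M : Matrix (ι × m) (ι × m) R) (T : Matrix (ι × m) l R) :
    Tᴴ * M * T = ∑ i, ∑ j, (T.submatrix (Prod.mk i) id)ᴴ *
      M.submatrix (Prod.mk i) (Prod.mk j) * T.submatrix (Prod.mk j) id := by
  ext k k'
  simp only [mul_apply, Fintype.sum_prod_type, Matrix.sum_apply, conjTranspose_apply,
    submatrix_apply, Finset.sum_mul, id_eq]
  exact (Finset.sum_congr rfl fun _ _ => Finset.sum_comm).trans Finset.sum_comm

variable [Fintype ι] [Fintype m] [DecidableEq ι]

theorem PosSemidef.submatrix_mulVec_eq_zero {M : Matrix (ι × m) (ι × m) 𝕜}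
    (hM : M.PosSemidef) {i : ι} {u : m → 𝕜}
    (hu : M.submatrix (Prod.mk i) (Prod.mk i) *ᵥ u = 0) (j : ι) :
    M.submatrix (Prod.mk j) (Prod.mk i) *ᵥ u = 0 := by
  set x : ι × m → 𝕜 := fun p => if p.1 = i then u p.2 else 0
  have hMx : ∀ p, (M *ᵥ x) p = (M.submatrix (Prod.mk p.1) (Prod.mk i) *ᵥ u) p.2 := by
    intro p
    simp [x, mulVec, dotProduct, Fintype.sum_prod_type]
  have hx : star x ⬝ᵥ M *ᵥ x = 0 := by
    simp [dotProduct, Fintype.sum_prod_type, hMx, x, apply_ite (starRingEnd 𝕜), ite_mul, hu]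
  ext k
  simpa [hMx] using congrFun ((hM.dotProduct_mulVec_zero_iff x).mp hx) (j, k)

theorem PosSemidef.submatrix_mul_eq_zero [Fintype l] {M : Matrix (ι × m) (ι × m) 𝕜}
    (hM : M.PosSemidef) {i : ι} {X : Matrix m l 𝕜}
    (hX : M.submatrix (Prod.mk i) (Prod.mk i) * X = 0) (j : ι) :
    M.submatrix (Prod.mk j) (Prod.mk i) * X = 0 := by
  rw [ext_iff_mulVec]
  intro v
  rw [← mulVec_mulVec, zero_mulVec]
  exact hM.submatrix_mulVec_eq_zero (by rw [mulVec_mulVec, hX, zero_mulVec]) j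

theorem PosSemidef.one_sub_mul_submatrix_eq_zero [DecidableEq m]
    {M : Matrix (ι × m) (ι × m) 𝕜} (hM : M.PosSemidef) {P : Matrix m m 𝕜}
    (hP : IsStarProjection P) {i : ι} {a : 𝕜}
    (hi : M.submatrix (Prod.mk i) (Prod.mk i) = a • P) (j : ι) :
    (1 - P) * M.submatrix (Prod.mk i) (Prod.mk j) = 0 := by
  have h : M.submatrix (Prod.mk j) (Prod.mk i) * (1 - P) = 0 :=
    hM.submatrix_mul_eq_zero (by rw [hi, smul_mul, hP.mul_one_sub_self, smul_zero]) j
  have hP' : (1 - P)ᴴ = 1 - P := hP.one_sub.isSelfAdjoint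
  simpa [conjTranspose_mul, hP', ← hM.1.submatrix_prodMk_swap j i] using
    congrArg (·ᴴ) h

end Blocks

section TwoBlocks

variable {m 𝕜 : Type*} [RCLike 𝕜]

theorem PosSemidef.submatrix_sub_smul_of_submatrix_eq_smul [Fintype m] [DecidableEq m]
    {M : Matrix (Fin 2 × m) (Fin 2 × m) 𝕜} (hM : M.PosSemidef) {P : Matrix m m 𝕜}
    (hP : IsStarProjection P) {a : ℝ} (ha : 0 < a) {κ : 𝕜}
    (h₀₀ : M.submatrix (Prod.mk 0) (Prod.mk 0) = (a : 𝕜) • P)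
    (h₀₁ : M.submatrix (Prod.mk 0) (Prod.mk 1) = κ • P) :
    (M.submatrix (Prod.mk 1) (Prod.mk 1) - ((‖κ‖ ^ 2 / a : ℝ) : 𝕜) • P).PosSemidef := by
  have hPh : Pᴴ = P := hP.isSelfAdjoint
  have h₁₀ := hM.1.submatrix_prodMk_swap_eq_smul hPh h₀₁
  set c : 𝕜 := -(κ / a)
  -- `c = -κ / a` minimises the form in the first block, so `Tᴴ M T` is the Schur complement
  set T : Matrix (Fin 2 × m) m 𝕜 := Matrix.of fun p k => ![c • P, 1] p.1 p.2 k
  have hT : ∀ i, T.submatrix (Prod.mk i) id = ![c • P, 1] i := fun i => rfl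
  convert hM.conjTranspose_mul_mul_same T using 1
  simp only [conjTranspose_mul_mul_eq_sum_submatrix, hT, Fin.sum_univ_two, h₀₀, h₀₁, h₁₀,
    Matrix.cons_val_zero, Matrix.cons_val_one, conjTranspose_smul, conjTranspose_one, hPh,
    Matrix.smul_mul, Matrix.mul_smul, Matrix.one_mul, Matrix.mul_one, hP.isIdempotentElem.eq,
    smul_smul, ← add_assoc, ← add_smul]
  rw [sub_eq_neg_add, ← neg_smul]
  congr 2
  have ha' : (a : 𝕜) ≠ 0 := by exact_mod_cast ha.ne'
  simp only [c, star_neg, star_div₀, RCLike.star_def, RCLike.conj_ofReal]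
  push_cast
  rw [← RCLike.mul_conj κ]
  field_simp
  ring

theorem IsHermitian.eq_kronecker_add_of_submatrix_eq_smul
    {M : Matrix (Fin 2 × m) (Fin 2 × m) 𝕜} (hM : M.IsHermitian) {P : Matrix m m 𝕜}
    (hP : P.IsHermitian) {a : ℝ} (ha : 0 < a) {κ : 𝕜}
    (h₀₀ : M.submatrix (Prod.mk 0) (Prod.mk 0) = (a : 𝕜) • P)
    (h₀₁ : M.submatrix (Prod.mk 0) (Prod.mk 1) = κ • P) :
    M = vecMulVec ![((√a : ℝ) : 𝕜), starRingEnd 𝕜 κ / ((√a : ℝ) : 𝕜)]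
          (star ![((√a : ℝ) : 𝕜), starRingEnd 𝕜 κ / ((√a : ℝ) : 𝕜)]) ⊗ₖ P
        + vecMulVec ![(0 : 𝕜), 1] (star ![(0 : 𝕜), 1])
          ⊗ₖ (M.submatrix (Prod.mk 1) (Prod.mk 1) - ((‖κ‖ ^ 2 / a : ℝ) : 𝕜) • P) := by
  have h₁₀ := hM.submatrix_prodMk_swap_eq_smul hP h₀₁
  have hs : ((√a : ℝ) : 𝕜) ^ 2 = a := by rw [← RCLike.ofReal_pow, Real.sq_sqrt ha.le]
  have hs₀ : ((√a : ℝ) : 𝕜) ≠ 0 := by exact_mod_cast (Real.sqrt_pos.2 ha).ne'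
  ext ⟨i, j⟩ ⟨i', k⟩
  rw [show M (i, j) (i', k) = M.submatrix (Prod.mk i) (Prod.mk i') j k from rfl]
  fin_cases i <;> fin_cases i' <;>
    simp only [Fin.zero_eta, Fin.mk_one, h₀₀, h₀₁, h₁₀, add_apply, kroneckerMap_apply,
      vecMulVec_apply, Pi.star_apply, cons_val_zero, cons_val_one, sub_apply, smul_apply,
      smul_eq_mul, RCLike.star_def, map_zero, map_one, map_div₀, RCLike.conj_conj,
      RCLike.conj_ofReal, zero_mul, mul_zero, one_mul, add_zero]
  · rw [← sq, hs]
  · field_simp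
  · field_simp
  · push_cast
    rw [← RCLike.mul_conj κ, RCLike.algebraMap_eq_ofReal, ← hs]
    field_simp
    ring

end TwoBlocks

end Matrix

theorem stmt18 {n : ℕ} (ρ : Matrix (Fin 2 × Fin n) (Fin 2 × Fin n) ℂ)
    (hρ : ρ.PosSemidef)
    (A B D : Matrix (Fin n) (Fin n) ℂ)
    (hA : ∀ j k, A j k = ρ (0, j) (0, k))
    (hB : ∀ j k, B j k = ρ (0, j) (1, k))
    (hD : ∀ j k, D j k = ρ (1, j) (1, k))
    (φ : Fin n → ℂ) (hφ : ∑ j, Complex.normSq (φ j) = 1)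
    (a : ℝ) (ha : 0 < a)
    (hAform : A = (a : ℂ) • Matrix.vecMulVec φ (star φ))
    (hBperp : Matrix.vecMulVec φ (star φ) * B
        * (1 - Matrix.vecMulVec φ (star φ)) = 0) :
    ∃ κ : ℂ,
      B = κ • Matrix.vecMulVec φ (star φ) ∧
      (D - ((‖κ‖ ^ 2 / a : ℝ) : ℂ) • Matrix.vecMulVec φ (star φ)).PosSemidef ∧
      ρ = Matrix.vecMulVec
            ![((Real.sqrt a : ℝ) : ℂ), (starRingEnd ℂ) κ / ((Real.sqrt a : ℝ) : ℂ)]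
            (star ![((Real.sqrt a : ℝ) : ℂ), (starRingEnd ℂ) κ / ((Real.sqrt a : ℝ) : ℂ)])
            ⊗ₖ Matrix.vecMulVec φ (star φ)
          + Matrix.vecMulVec ![(0 : ℂ), 1] (star ![(0 : ℂ), 1])
            ⊗ₖ (D - ((‖κ‖ ^ 2 / a : ℝ) : ℂ) • Matrix.vecMulVec φ (star φ)) ∧
      ∃ (k : ℕ) (P : Fin k → Matrix (Fin 2) (Fin 2) ℂ)
        (Q : Fin k → Matrix (Fin n) (Fin n) ℂ),
        (∀ i, (P i).PosSemidef ∧ (Q i).PosSemidef) ∧ ρ = ∑ i, P i ⊗ₖ Q i := by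
  set P := vecMulVec φ (star φ)
  have hφ₁ : star φ ⬝ᵥ φ = 1 := by
    rw [← Complex.ofReal_one, ← hφ, Complex.ofReal_sum]
    simp [dotProduct, Complex.normSq_eq_conj_mul_self]
  have hP : IsStarProjection P := isStarProjection_vecMulVec_self_star hφ₁
  have h₀₀ : ρ.submatrix (Prod.mk 0) (Prod.mk 0) = (a : ℂ) • P := by
    rw [← hAform]; ext; exact (hA _ _).symm
  have h₀₁ : ρ.submatrix (Prod.mk 0) (Prod.mk 1) = B := by ext; exact (hB _ _).symm
  have h₁₁ : ρ.submatrix (Prod.mk 1) (Prod.mk 1) = D := by ext; exact (hD _ _).symm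
  set κ := star φ ⬝ᵥ B *ᵥ φ
  have hBκ : B = κ • P :=
    (eq_mul_mul_self_of_one_sub_mul_eq_zero
      (h₀₁ ▸ hρ.one_sub_mul_submatrix_eq_zero hP h₀₀ 1) hBperp).trans
      (vecMulVec_mul_mul_vecMulVec φ B)
  have h₀₁' : ρ.submatrix (Prod.mk 0) (Prod.mk 1) = κ • P := h₀₁.trans hBκ
  have hS := hρ.submatrix_sub_smul_of_submatrix_eq_smul hP ha h₀₀ h₀₁'
  have hdec := hρ.1.eq_kronecker_add_of_submatrix_eq_smul hP.isSelfAdjoint ha h₀₀ h₀₁'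
  rw [h₁₁] at hS hdec
  set η : Fin 2 → ℂ := ![((√a : ℝ) : ℂ), starRingEnd ℂ κ / ((√a : ℝ) : ℂ)]
  refine ⟨κ, hBκ, hS, hdec, 2, ![vecMulVec η (star η), vecMulVec ![0, 1] (star ![0, 1])],
    ![P, D - ((‖κ‖ ^ 2 / a : ℝ) : ℂ) • P], ?_, by rw [Fin.sum_univ_two]; exact hdec⟩
  intro i
  fin_cases i
  · exact ⟨posSemidef_vecMulVec_self_star _, posSemidef_vecMulVec_self_star _⟩
  · exact ⟨posSemidef_vecMulVec_self_star _, hS⟩
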